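/- Let V be a finite-dimensional real vector space. A 5-linear map T : V^5 → ℝ is an algebraic covariant derivative curvature tensor if and only if (1/24)·y_{t'}*T = T, where y_{t'} is the Young symmetrizer of the standard tableau t' with rows {1,3,5} and {2,4}. -/

import Mathlib

/-- Action of a group ring element `a ∈ ℝ[S_r]` on an `r`-multilinear map:
`(aT)(v₁,…,v_r) = Σ_p a(p)·T(v_{p(1)},…,v_{p(r)})`. -/
noncomputable def gact {V : Type} [AddCommGroup V] [Module ℝ V] {r : ℕ}
    (a : MonoidAlgebra ℝ (Equiv.Perm (Fin r)))
    (T : MultilinearMap ℝ (fun _ : Fin r => V) ℝ) :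
    MultilinearMap ℝ (fun _ : Fin r => V) ℝ :=
  ∑ p : Equiv.Perm (Fin r), a.coeff p • T.domDomCongr p
/-- The star map `a* := Σ_p a(p)·p⁻¹` on the group ring `ℝ[S_r]`. -/
noncomputable def astar {r : ℕ} (a : MonoidAlgebra ℝ (Equiv.Perm (Fin r))) :
    MonoidAlgebra ℝ (Equiv.Perm (Fin r)) :=
  MonoidAlgebra.ofCoeff (Finsupp.equivFunOnFinite.symm (fun p => a.coeff p⁻¹))
/-- The Young symmetrizer `y_{t'} = Σ_{p∈H_{t'}} Σ_{q∈V_{t'}} sign(q)·(p∘q)` of the tableau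
with rows `{1,3,5}`, `{2,4}` (indices `0`-based in `Fin 5`): `H_{t'}` is the group of
permutations mapping `{0,2,4}` to itself and `{1,3}` to itself, and
`V_{t'} = {id, (1 2), (3 4), (1 2)(3 4)}`. -/
noncomputable def ytp : MonoidAlgebra ℝ (Equiv.Perm (Fin 5)) :=
  (∑ p ∈ Finset.univ.filter (fun p : Equiv.Perm (Fin 5) =>
      ({0, 2, 4} : Finset (Fin 5)).image p = {0, 2, 4} ∧
      ({1, 3} : Finset (Fin 5)).image p = {1, 3}),
    MonoidAlgebra.single p (1 : ℝ)) *
  (MonoidAlgebra.single 1 1 - MonoidAlgebra.single (Equiv.swap 0 1) 1 -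
     MonoidAlgebra.single (Equiv.swap 2 3) 1 +
     MonoidAlgebra.single (Equiv.swap 0 1 * Equiv.swap 2 3) 1)

/-!
Write `y_{t'} = P * Q` with `P` the row symmetrizer and `Q` the column antisymmetrizer; then
`y_{t'}*` acts on tensors as `Q ∘ P`. The row group is `S_{0,2,4} ⊔ S_{0,2,4} * (0 2)(1 3)`, and
`(0 2)(1 3)` acts on a tensor as the pair symmetry `R(w,x,y,z) ↦ R(y,z,w,x)`; so for a
pair-symmetric `T`, `y_{t'}* T = 2 Q P₃ T`, with `P₃` the symmetrizer of `S_{0,2,4}`, is a sum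
of 24 terms. Sorted by the vector in the last slot, these terms form six antisymmetrizations of
`S(x,y,z,t) = R(x,y,z,t) + R(z,y,x,t)`, and for an algebraic curvature tensor `R` each of them
returns `3 R`; the second Bianchi identity then assembles the pieces into `24 T`.

Conversely, each defining identity of an algebraic covariant derivative curvature tensor says
`x T = 0` for some `x ∈ ℝ[S₅]` with `x * y_{t'}* = 0`, so every `y_{t'}* S` satisfies it, and so
does `T = y_{t'}* T / 24`.
-/

open Equiv
open MonoidAlgebra (single coeff_single coeff_add coeff_sub coeff_sum coeff_ofCoeff
  single_mul_single)

lemma Finset.image_perm_inv {α : Type*} [DecidableEq α] {s : Finset α} {p : Perm α}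
    (h : s.image p = s) : s.image ⇑p⁻¹ = s := by
  conv_lhs => rw [← h]
  simp [Finset.image_image]

lemma eq_vecCons_five {α : Type*} (v : Fin 5 → α) : v = ![v 0, v 1, v 2, v 3, v 4] := by
  funext i; fin_cases i <;> rfl

section GroupRingAction

variable {V : Type} [AddCommGroup V] [Module ℝ V] {r : ℕ}
  (a b : MonoidAlgebra ℝ (Perm (Fin r))) (T : MultilinearMap ℝ (fun _ : Fin r => V) ℝ)

lemma astar_zero : astar (0 : MonoidAlgebra ℝ (Perm (Fin r))) = 0 := by
  ext p; simp [astar]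

lemma astar_add : astar (a + b) = astar a + astar b := by
  ext p; simp [astar]

lemma astar_sub : astar (a - b) = astar a - astar b := by
  ext p; simp [astar]

lemma astar_single (g : Perm (Fin r)) (c : ℝ) : astar (single g c) = single g⁻¹ c := by
  ext p
  simp only [astar, coeff_ofCoeff, Finsupp.coe_equivFunOnFinite_symm, coeff_single,
    Finsupp.single_apply, inv_eq_iff_eq_inv]

lemma astar_mul : astar (a * b) = astar b * astar a := by
  induction a using MonoidAlgebra.induction_linear with
  | zero => simp [astar_zero]
  | add a a' ha ha' => rw [add_mul, astar_add, ha, ha', astar_add, mul_add]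
  | single g c =>
    induction b using MonoidAlgebra.induction_linear with
    | zero => simp [astar_zero]
    | add b b' hb hb' => rw [mul_add, astar_add, hb, hb', astar_add, add_mul]
    | single h d => simp only [single_mul_single, astar_single, mul_inv_rev, mul_comm c d]

lemma astar_sum_single {s : Finset (Perm (Fin r))} (hs : ∀ p ∈ s, p⁻¹ ∈ s) (c : ℝ) :
    astar (∑ p ∈ s, single p c) = ∑ p ∈ s, single p c := by
  have hs' : ∀ p, p⁻¹ ∈ s ↔ p ∈ s := fun p => ⟨fun h => by simpa using hs _ h, hs p⟩
  ext p
  simp [astar, coeff_sum, Finsupp.finsetSum_apply, coeff_single, Finsupp.single_apply, hs']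

lemma gact_zero : gact 0 T = 0 := by
  simp [gact]

lemma gact_add : gact (a + b) T = gact a T + gact b T := by
  simp only [gact, coeff_add, Finsupp.add_apply, add_smul, Finset.sum_add_distrib]

lemma gact_sub : gact (a - b) T = gact a T - gact b T := by
  simp only [gact, coeff_sub, Finsupp.sub_apply, ← Finset.sum_sub_distrib]
  exact Finset.sum_congr rfl fun p _ => by ext v; simp [sub_mul]

lemma gact_sum {ι : Type*} (s : Finset ι) (f : ι → MonoidAlgebra ℝ (Perm (Fin r))) :
    gact (∑ i ∈ s, f i) T = ∑ i ∈ s, gact (f i) T := by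
  classical
  induction s using Finset.induction_on with
  | empty => simp [gact_zero]
  | insert i s hi ih => rw [Finset.sum_insert hi, Finset.sum_insert hi, gact_add, ih]

lemma gact_single (g : Perm (Fin r)) (c : ℝ) : gact (single g c) T = c • T.domDomCongr g := by
  rw [gact, Finset.sum_eq_single g]
  · simp
  · intro p _ hp; simp [coeff_single, Ne.symm hp]
  · simp

lemma gact_one : gact 1 T = T := by
  rw [show (1 : MonoidAlgebra ℝ (Perm (Fin r))) = single 1 1 from rfl, gact_single, one_smul]
  rfl

lemma gact_mul : gact (a * b) T = gact a (gact b T) := by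
  induction a using MonoidAlgebra.induction_linear with
  | zero => simp [gact_zero]
  | add a a' ha ha' => rw [add_mul, gact_add, ha, ha', gact_add]
  | single g c =>
    induction b using MonoidAlgebra.induction_linear with
    | zero => ext v; simp [gact_zero, gact_single]
    | add b b' hb hb' =>
      rw [mul_add, gact_add, hb, hb', gact_add]
      ext v; simp [gact_single, mul_add]
    | single h d =>
      ext v
      simp [gact_single, MultilinearMap.domDomCongr_mul, mul_assoc]

end GroupRingAction

structure IsAlgCurvatureTensor {α : Type*} (R : α → α → α → α → ℝ) : Prop where
  antisymm : ∀ w x y z, R w x y z = -R w x z y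
  pair_symm : ∀ w x y z, R w x y z = R y z w x
  bianchi : ∀ w x y z, R w x y z + R w y z x + R w z x y = 0

namespace IsAlgCurvatureTensor

variable {α : Type*} {R : α → α → α → α → ℝ} (hR : IsAlgCurvatureTensor R)
include hR

lemma const_mul (c : ℝ) : IsAlgCurvatureTensor (fun w x y z => c * R w x y z) where
  antisymm w x y z := by rw [hR.antisymm w x y z, mul_neg]
  pair_symm w x y z := by rw [hR.pair_symm w x y z]
  bianchi w x y z := by linear_combination c * hR.bianchi w x y z

lemma antisymm_left (w x y z : α) : R x w y z = -R w x y z := by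
  linear_combination hR.pair_symm x w y z + hR.antisymm y z x w + hR.pair_symm w x y z

lemma symm_outer_sub_swap_last (x y z t : α) :
    R x y z t + R z y x t - (R x y t z + R t y x z) = 3 * R x y z t := by
  linear_combination -2 * hR.antisymm x y z t - hR.antisymm x z y t + hR.pair_symm x z t y
    - hR.pair_symm x t z y + hR.bianchi x y t z

lemma symm_outer_sub_swap_first (x y z t : α) :
    R x y z t + R z y x t - (R y x z t + R z x y t) = 3 * R x y z t := by
  linear_combination -hR.antisymm z x y t - 2 * hR.antisymm z t x y - 2 * hR.pair_symm x y z t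
    - hR.pair_symm y x z t + hR.bianchi z x t y

end IsAlgCurvatureTensor

structure IsAlgCovDerivCurvatureTensor {α : Type*} (T : α → α → α → α → α → ℝ) : Prop where
  curvature : ∀ u, IsAlgCurvatureTensor (fun w x y z => T w x y z u)
  second_bianchi : ∀ u w x y z, T w x y z u + T w x z u y + T w x u y z = 0

lemma isAlgCovDerivCurvatureTensor_iff {α : Type*} (T : α → α → α → α → α → ℝ) :
    IsAlgCovDerivCurvatureTensor T ↔
      (∀ u w x y z, T w x y z u = -T w x z y u) ∧ (∀ u w x y z, T w x y z u = T y z w x u) ∧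
      (∀ u w x y z, T w x y z u + T w y z x u + T w z x y u = 0) ∧
      (∀ u w x y z, T w x y z u + T w x z u y + T w x u y z = 0) :=
  ⟨fun h => ⟨fun u => (h.curvature u).antisymm, fun u => (h.curvature u).pair_symm,
      fun u => (h.curvature u).bianchi, h.second_bianchi⟩,
    fun ⟨h1, h2, h3, h4⟩ => ⟨fun u => ⟨h1 u, h2 u, h3 u⟩, h4⟩⟩

namespace IsAlgCovDerivCurvatureTensor

variable {α : Type*} {T : α → α → α → α → α → ℝ} (hT : IsAlgCovDerivCurvatureTensor T)
include hT

lemma const_mul (c : ℝ) : IsAlgCovDerivCurvatureTensor (fun w x y z u => c * T w x y z u) where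
  curvature u := (hT.curvature u).const_mul c
  second_bianchi u w x y z := by linear_combination c * hT.second_bianchi u w x y z

lemma swap_last_sub (a b c d e : α) : T a b e d c - T a b e c d = T a b c d e := by
  linear_combination -hT.second_bianchi e a b c d + (hT.curvature c).antisymm a b d e

lemma swap_first_sub (a b c d e : α) : T e b c d a - T e a c d b = T a b c d e := by
  linear_combination (hT.curvature a).pair_symm e b c d - (hT.curvature b).pair_symm e a c d
    + (hT.curvature a).antisymm c d e b - hT.second_bianchi e c d a b
    - (hT.curvature e).pair_symm a b c d

end IsAlgCovDerivCurvatureTensor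

def rowGroup : Finset (Perm (Fin 5)) :=
  Finset.univ.filter (fun p : Perm (Fin 5) =>
      ({0, 2, 4} : Finset (Fin 5)).image p = {0, 2, 4} ∧
      ({1, 3} : Finset (Fin 5)).image p = {1, 3})

def firstRowPerms : Finset (Perm (Fin 5)) :=
  {1, swap 0 2, swap 0 4, swap 2 4, swap 0 2 * swap 2 4, swap 2 4 * swap 0 2}

def pairSwap : Perm (Fin 5) := swap 0 2 * swap 1 3

noncomputable def rowSym : MonoidAlgebra ℝ (Perm (Fin 5)) := ∑ p ∈ rowGroup, single p 1

noncomputable def firstRowSym : MonoidAlgebra ℝ (Perm (Fin 5)) := ∑ p ∈ firstRowPerms, single p 1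

noncomputable def colAntisym : MonoidAlgebra ℝ (Perm (Fin 5)) :=
  single 1 1 - single (swap 0 1) 1 - single (swap 2 3) 1 + single (swap 0 1 * swap 2 3) 1

lemma ytp_eq : ytp = rowSym * colAntisym := rfl

lemma rowGroup_eq :
    rowGroup = firstRowPerms ∪ firstRowPerms.map (mulRightEmbedding pairSwap) := by
  decide

lemma disjoint_firstRowPerms :
    Disjoint firstRowPerms (firstRowPerms.map (mulRightEmbedding pairSwap)) := by
  decide

lemma rowSym_eq : rowSym = firstRowSym * (1 + single pairSwap 1) := by
  rw [rowSym, rowGroup_eq, Finset.sum_union disjoint_firstRowPerms, Finset.sum_map, firstRowSym,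
    Finset.sum_mul, ← Finset.sum_add_distrib]
  simp [mul_add, single_mul_single]

lemma inv_mem_rowGroup {p : Perm (Fin 5)} (hp : p ∈ rowGroup) : p⁻¹ ∈ rowGroup := by
  simp only [rowGroup, Finset.mem_filter, Finset.mem_univ, true_and] at hp ⊢
  exact ⟨Finset.image_perm_inv hp.1, Finset.image_perm_inv hp.2⟩

lemma astar_rowSym : astar rowSym = rowSym :=
  astar_sum_single (fun _ => inv_mem_rowGroup) 1

lemma astar_colAntisym : astar colAntisym = colAntisym := by
  simp only [colAntisym, astar_add, astar_sub, astar_single, inv_one, swap_inv, mul_inv_rev]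
  rw [show swap (2 : Fin 5) 3 * swap 0 1 = swap 0 1 * swap 2 3 by decide]

section YoungSymmetrizerAction

variable {V : Type} [AddCommGroup V] [Module ℝ V]

lemma gact_astar_ytp (T : MultilinearMap ℝ (fun _ : Fin 5 => V) ℝ) :
    gact (astar ytp) T = gact colAntisym (gact firstRowSym (T + T.domDomCongr pairSwap)) := by
  rw [ytp_eq, astar_mul, astar_colAntisym, astar_rowSym, rowSym_eq, gact_mul, gact_mul, gact_add,
    gact_one, gact_single, one_smul]

variable (S : MultilinearMap ℝ (fun _ : Fin 5 => V) ℝ) (a b c d e : V)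

lemma domDomCongr_apply_vecCons (σ : Perm (Fin 5)) (v : Fin 5 → V) :
    S.domDomCongr σ v = S ![v (σ 0), v (σ 1), v (σ 2), v (σ 3), v (σ 4)] :=
  congrArg S (eq_vecCons_five _)

lemma domDomCongr_pairSwap_apply :
    S.domDomCongr pairSwap ![a, b, c, d, e] = S ![c, d, a, b, e] := by
  rw [domDomCongr_apply_vecCons]
  simp [pairSwap, swap_apply_of_ne_of_ne]

lemma gact_colAntisym_apply :
    gact colAntisym S ![a, b, c, d, e] =
      S ![a, b, c, d, e] - S ![b, a, c, d, e] - S ![a, b, d, c, e] + S ![b, a, d, c, e] := by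
  simp only [colAntisym, gact_add, gact_sub, gact_single, one_smul, add_apply, sub_apply,
    domDomCongr_apply_vecCons]
  simp [swap_apply_of_ne_of_ne]

lemma gact_firstRowSym_apply :
    gact firstRowSym S ![a, b, c, d, e] =
      S ![a, b, c, d, e] + S ![c, b, a, d, e] + S ![e, b, c, d, a] + S ![a, b, e, d, c] +
        S ![c, b, e, d, a] + S ![e, b, a, d, c] := by
  simp only [firstRowSym, firstRowPerms, gact_sum, gact_single, one_smul]
  rw [Finset.sum_insert (by decide), Finset.sum_insert (by decide), Finset.sum_insert (by decide),
    Finset.sum_insert (by decide), Finset.sum_insert (by decide), Finset.sum_singleton]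
  simp only [add_apply, domDomCongr_apply_vecCons]
  simp [swap_apply_of_ne_of_ne, add_assoc]

theorem isAlgCovDerivCurvatureTensor_gact_astar_ytp :
    IsAlgCovDerivCurvatureTensor (fun w x y z u => gact (astar ytp) S ![w, x, y, z, u]) := by
  simp only [gact_astar_ytp, gact_colAntisym_apply, gact_firstRowSym_apply, add_apply,
    domDomCongr_pairSwap_apply]
  exact ⟨fun u => ⟨fun w x y z => by ring, fun w x y z => by ring, fun w x y z => by ring⟩,
    fun u w x y z => by ring⟩

theorem gact_astar_ytp_of_isAlgCovDerivCurvatureTensor {T : MultilinearMap ℝ (fun _ : Fin 5 => V) ℝ}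
    (hT : IsAlgCovDerivCurvatureTensor (fun w x y z u => T ![w, x, y, z, u])) :
    gact (astar ytp) T = (24 : ℝ) • T := by
  have hpair : T.domDomCongr pairSwap = T := by
    ext v
    rw [eq_vecCons_five v, domDomCongr_pairSwap_apply]
    exact ((hT.curvature _).pair_symm _ _ _ _).symm
  ext v
  rw [eq_vecCons_five v, gact_astar_ytp, hpair]
  generalize v 0 = a, v 1 = b, v 2 = c, v 3 = d, v 4 = e
  simp only [gact_colAntisym_apply, gact_firstRowSym_apply, add_apply, smul_apply, smul_eq_mul]
  have hR := hT.curvature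
  -- the six groups of terms sharing the vector in the last slot
  linear_combination 2 * ((hR e).symm_outer_sub_swap_last a b c d
    - (hR e).symm_outer_sub_swap_last b a c d + (hR a).symm_outer_sub_swap_last e b c d
    - (hR b).symm_outer_sub_swap_last e a c d + (hR c).symm_outer_sub_swap_first a b e d
    - (hR d).symm_outer_sub_swap_first a b e c)
    - 6 * (hR e).antisymm_left a b c d + 6 * hT.swap_first_sub a b c d e
    + 6 * hT.swap_last_sub a b c d e

end YoungSymmetrizerAction

theorem stmt_4_general (V : Type) [AddCommGroup V] [Module ℝ V]
    (T : MultilinearMap ℝ (fun _ : Fin 5 => V) ℝ) :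
    ((∀ u w x y z : V, T ![w, x, y, z, u] = - T ![w, x, z, y, u]) ∧
     (∀ u w x y z : V, T ![w, x, y, z, u] = T ![y, z, w, x, u]) ∧
     (∀ u w x y z : V,
       T ![w, x, y, z, u] + T ![w, y, z, x, u] + T ![w, z, x, y, u] = 0) ∧
     (∀ u w x y z : V,
       T ![w, x, y, z, u] + T ![w, x, z, u, y] + T ![w, x, u, y, z] = 0)) ↔
    (1/24 : ℝ) • gact (astar ytp) T = T := by
  refine (isAlgCovDerivCurvatureTensor_iff fun w x y z u => T ![w, x, y, z, u]).symm.trans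
    ⟨fun hT => ?_, fun h => ?_⟩
  · rw [gact_astar_ytp_of_isAlgCovDerivCurvatureTensor hT, smul_smul]
    norm_num
  · rw [← h]
    exact (isAlgCovDerivCurvatureTensor_gact_astar_ytp T).const_mul _

/-- A 5-linear map `T : V⁵ → ℝ` on a finite-dimensional real vector space is
an algebraic covariant derivative curvature tensor iff `(1/24)·y_{t'}*·T = T`. -/
theorem stmt_4 (V : Type) [AddCommGroup V] [Module ℝ V] [FiniteDimensional ℝ V]
    (T : MultilinearMap ℝ (fun _ : Fin 5 => V) ℝ) :
    ((∀ u w x y z : V, T ![w, x, y, z, u] = - T ![w, x, z, y, u]) ∧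
     (∀ u w x y z : V, T ![w, x, y, z, u] = T ![y, z, w, x, u]) ∧
     (∀ u w x y z : V,
       T ![w, x, y, z, u] + T ![w, y, z, x, u] + T ![w, z, x, y, u] = 0) ∧
     (∀ u w x y z : V,
       T ![w, x, y, z, u] + T ![w, x, z, u, y] + T ![w, x, u, y, z] = 0)) ↔
    (1/24 : ℝ) • gact (astar ytp) T = T :=
  stmt_4_general V T
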